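/- arXiv:1910.11660 — 2 statements merged into one kernel-verified Lean document; each statement's English description precedes it below -/
import Mathlib

section
/- Let {X_n} be a sequence of real random variables with common marginal distribution function F and let (x_n) be real numbers with n·F̄(x_n) → τ > 0, F̄(x_n) > 0 for all n. Suppose there is a sequence of positive integers q_n = o(n) such that α*_{⌈cn⌉, q_n}(x_n) → 0 for every c > 0, and let (p_n) be positive integers with p_n = o(n), q_n = o(p_n) and n·α_n = o(p_n), where α_n are the AIM mixing coefficients associated with (q_n). Set θ_{i,n} = P(M_{i,i+p_n} ≤ x_n | X_i > x_n), suppose the limits θ_i = lim_{n→∞} θ_{i,n} exist, that max_{1≤i≤⌈cn⌉} |θ_i − θ_{i,n}| → 0 for every c > 0, and that the Cesàro means (1/n) ∑_{i=1}^{n} θ_i converge to γ. Then for each fixed i ∈ ℕ and each t > 0, P(F̄(x_n)·T_i(x_n) > t | X_i > x_n) → θ_i·exp(−γt) as n → ∞. -/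
open MeasureTheory Filter Finset Asymptotics

/-- Probability of an event as a real number. -/
noncomputable def pr {Ω : Type*} [MeasurableSpace Ω] (P : Measure Ω) (A : Set Ω) : ℝ :=
  (P A).toReal

/-- The event that `X i ≤ x` for every index `i` in the set `S`;
this is the event `{M(S) ≤ x}` where `M(S) = max {X i : i ∈ S}`. -/
def allLe {Ω : Type*} (X : ℕ → Ω → ℝ) (S : Set ℕ) (x : ℝ) : Set Ω :=
  {ω | ∀ i ∈ S, X i ω ≤ x}

/-- `α` is a sequence of AIM mixing coefficients for `X` relative to thresholds `xs`
with separation sequence `q`: for any two intervals `I₁ = [a,b]`, `I₂ = [b+qₙ+1, c]`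
contained in `{1,…,n}`, separated by `qₙ`, each of cardinality at least `qₙ`,
the maximum-based discrepancy is bounded by `α n`. -/
def AIMBound {Ω : Type*} [MeasurableSpace Ω] (P : Measure Ω) (X : ℕ → Ω → ℝ)
    (xs : ℕ → ℝ) (q : ℕ → ℕ) (α : ℕ → ℝ) : Prop :=
  ∀ n a b c : ℕ, 1 ≤ a → a ≤ b → b + q n + 1 ≤ c → c ≤ n →
    q n ≤ b + 1 - a → q n ≤ c - (b + q n) →
    |pr P (allLe X (Set.Icc a b ∪ Set.Icc (b + q n + 1) c) (xs n)) -
      pr P (allLe X (Set.Icc a b) (xs n)) *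
        pr P (allLe X (Set.Icc (b + q n + 1) c) (xs n))| ≤ α n

/-- The σ-algebra generated by the exceedance events `{X i > u}` for `j₁ ≤ i ≤ j₂`. -/
def excSigma {Ω : Type*} (X : ℕ → Ω → ℝ) (u : ℝ) (j₁ j₂ : ℕ) : MeasurableSpace Ω :=
  MeasurableSpace.generateFrom {S | ∃ i : ℕ, j₁ ≤ i ∧ i ≤ j₂ ∧ S = {ω | u < X i ω}}

/-!
Write `u = xₙ`, `F̄ = F̄(xₙ)` and `b = i + ⌊t / F̄⌋`, so that the event in question is
`{X_i > u, M_{i,b} ≤ u}`. Splitting `{M_{a,b} > u}` at its last exceedance `s`, and using the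
`α*`-mixing to separate the block `(s, s + pₙ]` from `(s + pₙ + qₙ, b]` across the gap of length
`qₙ`, shows that `g a = P(M_{a,b} ≤ u)` solves the delayed renewal equation
`g a = 1 - ∑_{a < s ≤ b} F̄ θ_s g (s + pₙ + qₙ)` up to `o(1)`. So does
`exp (-F̄ ∑_{a < s ≤ b} θ_s)`, and a discrete Gronwall inequality makes the two `o(1)`-close. The
same decoupling at `s = i` gives `P(M_{i,b} ≤ u | X_i > u) ≈ θ_{i,n} g (i + pₙ + qₙ)`, and the
Cesàro hypothesis gives `F̄ ∑_{s ≤ b} θ_s → γ t`.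
-/

open Real Topology

section Pr

variable {Ω : Type*} [MeasurableSpace Ω]

lemma pr_nonneg (P : Measure Ω) (A : Set Ω) : 0 ≤ pr P A := measureReal_nonneg

lemma pr_mono (P : Measure Ω) [IsFiniteMeasure P] {A B : Set Ω} (h : A ⊆ B) :
    pr P A ≤ pr P B :=
  measureReal_mono h

lemma pr_inter_add_diff (P : Measure Ω) [IsFiniteMeasure P] (A : Set Ω) {B : Set Ω}
    (hB : MeasurableSet B) : pr P (A ∩ B) + pr P (A \ B) = pr P A :=
  measureReal_inter_add_sdiff hB

lemma pr_biUnion_finset_le (P : Measure Ω) {ι : Type*} (s : Finset ι) (f : ι → Set Ω) :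
    pr P (⋃ j ∈ s, f j) ≤ ∑ j ∈ s, pr P (f j) :=
  measureReal_biUnion_finset_le s f

lemma pr_le_one (P : Measure Ω) [IsProbabilityMeasure P] (A : Set Ω) : pr P A ≤ 1 :=
  measureReal_le_one

lemma pr_univ (P : Measure Ω) [IsProbabilityMeasure P] : pr P Set.univ = 1 := probReal_univ

lemma pr_compl (P : Measure Ω) [IsProbabilityMeasure P] {A : Set Ω} (hA : MeasurableSet A) :
    pr P Aᶜ = 1 - pr P A :=
  probReal_compl_eq_one_sub hA

lemma pr_lt_eq_one_sub (P : Measure Ω) [IsProbabilityMeasure P] {Y : Ω → ℝ} (hY : Measurable Y)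
    (u : ℝ) : pr P {ω | u < Y ω} = 1 - pr P {ω | Y ω ≤ u} := by
  simpa [Set.compl_ofPred] using
    pr_compl P (measurableSet_le hY measurable_const : MeasurableSet {ω | Y ω ≤ u})

end Pr

section Events

variable {Ω : Type*} {X : ℕ → Ω → ℝ}

lemma allLe_of_lt {a b : ℕ} (h : b < a) (u : ℝ) : allLe X (Set.Icc a b) u = Set.univ := by
  simp [allLe, Set.Icc_eq_empty_of_lt h]

lemma allLe_Icc_eq_inter {a b : ℕ} (h : a ≤ b) (u : ℝ) :
    allLe X (Set.Icc a b) u = {ω | X a ω ≤ u} ∩ allLe X (Set.Icc (a + 1) b) u := by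
  ext ω
  simp only [allLe, Set.mem_Icc, Set.mem_inter_iff, Set.mem_ofPred_eq]
  refine ⟨fun hω => ⟨hω a ⟨le_rfl, h⟩, fun j hj => hω j ⟨by omega, hj.2⟩⟩, ?_⟩
  rintro ⟨ha, hω⟩ j ⟨hj₁, hj₂⟩
  rcases hj₁.eq_or_lt with rfl | hj₁
  exacts [ha, hω j ⟨hj₁, hj₂⟩]

lemma allLe_mono {S T : Set ℕ} (h : S ⊆ T) (u : ℝ) : allLe X T u ⊆ allLe X S u :=
  fun _ hω i hi => hω i (h hi)

lemma measurableSet_excSigma_exceed {u : ℝ} {j₁ j₂ s : ℕ} (h₁ : j₁ ≤ s) (h₂ : s ≤ j₂) :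
    MeasurableSet[excSigma X u j₁ j₂] {ω | u < X s ω} :=
  MeasurableSpace.measurableSet_generateFrom ⟨s, h₁, h₂, rfl⟩

lemma measurableSet_excSigma_allLe {u : ℝ} {j₁ j₂ a b : ℕ} (h₁ : j₁ ≤ a) (h₂ : b ≤ j₂) :
    MeasurableSet[excSigma X u j₁ j₂] (allLe X (Set.Icc a b) u) := by
  simp only [allLe, Set.ofPred_forall, ← not_lt]
  exact MeasurableSet.biInter (Set.to_countable _) fun s hs =>
    (measurableSet_excSigma_exceed (h₁.trans hs.1) (hs.2.trans h₂)).compl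

variable [MeasurableSpace Ω]

lemma measurableSet_allLe (hmeas : ∀ i, Measurable (X i)) (S : Set ℕ) (u : ℝ) :
    MeasurableSet (allLe X S u) := by
  simpa only [allLe, Set.ofPred_forall] using
    MeasurableSet.biInter S.to_countable fun i _ => measurableSet_le (hmeas i) measurable_const

lemma measurableSet_exceed (hmeas : ∀ i, Measurable (X i)) (u : ℝ) (s : ℕ) :
    MeasurableSet {ω | u < X s ω} :=
  measurableSet_lt measurable_const (hmeas s)

end Events

lemma Nat.strong_decreasing_induction_of_forall_ge {P : ℕ → Prop} (b : ℕ)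
    (base : ∀ a, b ≤ a → P a) (step : ∀ a < b, (∀ a' > a, P a') → P a) (a : ℕ) : P a :=
  Nat.strong_decreasing_induction ⟨b, fun m hm => base m hm.le⟩
    (fun a ih => if h : b ≤ a then base a h else step a (not_le.1 h) ih) a

lemma Finset.sum_Icc_succ_eq_add {M : Type*} [AddCommMonoid M] (f : ℕ → M) {a b : ℕ}
    (h : a < b) : ∑ s ∈ Icc (a + 1) b, f s = f (a + 1) + ∑ s ∈ Icc (a + 1 + 1) b, f s := by
  rw [← add_sum_Ioc_eq_sum_Icc h, ← Icc_add_one_left_eq_Ioc]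

lemma Finset.Icc_succ_subset_Icc_one (a b : ℕ) : Icc (a + 1) b ⊆ Icc 1 b :=
  Icc_subset_Icc (Nat.le_add_left 1 a) le_rfl

section Exceedances

variable {Ω : Type*} [MeasurableSpace Ω] (P : Measure Ω) [IsProbabilityMeasure P]
  {X : ℕ → Ω → ℝ}

lemma pr_allLe_eq_one_sub_sum_last_exceedance (hmeas : ∀ i, Measurable (X i)) (u : ℝ)
    (b a : ℕ) :
    pr P (allLe X (Set.Icc (a + 1) b) u) =
      1 - ∑ s ∈ Icc (a + 1) b, pr P ({ω | u < X s ω} ∩ allLe X (Set.Icc (s + 1) b) u) := by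
  induction a using Nat.strong_decreasing_induction_of_forall_ge b with
  | base a ha => simp [allLe_of_lt (Nat.lt_succ_of_le ha), pr_univ,
      Finset.Icc_eq_empty_of_lt (Nat.lt_succ_of_le ha)]
  | step a ha ih =>
    have hsplit := pr_inter_add_diff P (allLe X (Set.Icc (a + 1 + 1) b) u)
      (measurableSet_exceed hmeas u (a + 1))
    have hlast : allLe X (Set.Icc (a + 1 + 1) b) u \ {ω | u < X (a + 1) ω} =
        allLe X (Set.Icc (a + 1) b) u := by
      ext ω; simp [allLe_Icc_eq_inter ha, and_comm]
    rw [hlast, Set.inter_comm, ih (a + 1) (Nat.lt_succ_self a)] at hsplit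
    rw [sum_Icc_succ_eq_add _ ha]
    linarith

lemma pr_compl_allLe_le {u F : ℝ}
    (hF : ∀ s, 1 ≤ s → pr P {ω | u < X s ω} = F) {a b : ℕ} (ha : 1 ≤ a) :
    pr P (allLe X (Set.Icc a b) u)ᶜ ≤ #(Icc a b) * F := by
  have hcover : (allLe X (Set.Icc a b) u)ᶜ ⊆ ⋃ s ∈ Icc a b, {ω | u < X s ω} := by
    intro ω hω
    simp only [allLe, Set.mem_compl_iff, Set.mem_ofPred_eq, not_forall, not_le] at hω
    obtain ⟨s, hs, hlt⟩ := hω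
    exact Set.mem_biUnion (Finset.mem_coe.2 (Finset.mem_Icc.2 hs)) hlt
  calc pr P (allLe X (Set.Icc a b) u)ᶜ ≤ ∑ s ∈ Icc a b, pr P {ω | u < X s ω} :=
        (pr_mono P hcover).trans (pr_biUnion_finset_le P _ _)
    _ = #(Icc a b) * F := by
        rw [sum_congr rfl fun s hs => hF s (ha.trans (mem_Icc.1 hs).1), sum_const, nsmul_eq_mul]

end Exceedances

section Mixing

variable {Ω : Type*} [MeasurableSpace Ω] (P : Measure Ω) (X : ℕ → Ω → ℝ)

/-- `α*_{C,q}(u) ≤ ε`, with the conditional probability multiplied out. -/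
def ExceedanceMixing (u : ℝ) (q C : ℕ) (ε : ℝ) : Prop :=
  ∀ l, 1 ≤ l → l + q ≤ C → ∀ E₁ E₂ : Set Ω, MeasurableSet[excSigma X u 1 l] E₁ →
    MeasurableSet[excSigma X u (l + q) C] E₂ →
    |pr P (E₁ ∩ E₂) - pr P E₁ * pr P E₂| ≤ ε * pr P E₁

variable {P X}

lemma exceedanceMixing_of_cond [IsFiniteMeasure P] {u ε : ℝ} {q C : ℕ}
    (h : ∀ l, 1 ≤ l → l + q ≤ C → ∀ E₁ E₂ : Set Ω, MeasurableSet[excSigma X u 1 l] E₁ →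
      MeasurableSet[excSigma X u (l + q) C] E₂ →
      0 < pr P E₁ → |pr P (E₁ ∩ E₂) / pr P E₁ - pr P E₂| < ε) :
    ExceedanceMixing P X u q C ε := by
  intro l hl hlC E₁ E₂ hE₁ hE₂
  rcases (pr_nonneg P E₁).eq_or_lt with h₀ | hpos
  · have : pr P (E₁ ∩ E₂) = 0 :=
      le_antisymm (h₀ ▸ pr_mono P Set.inter_subset_left) (pr_nonneg P _)
    simp [this, ← h₀]
  · calc |pr P (E₁ ∩ E₂) - pr P E₁ * pr P E₂|
        = |pr P (E₁ ∩ E₂) / pr P E₁ - pr P E₂| * pr P E₁ := by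
          rw [← abs_of_pos hpos, ← abs_mul, abs_of_pos hpos, sub_mul, div_mul_cancel₀ _ hpos.ne',
            mul_comm]
      _ ≤ ε * pr P E₁ := by gcongr; exact (h l hl hlC E₁ E₂ hE₁ hE₂ hpos).le

/-- After an exceedance at `s`, the block `(s, s + p]` decouples from `(s + p + q, b]`: an
exceedance in the gap `(s + p, s + p + q]` costs `O(q F)`, and the rest is mixing. -/
lemma abs_pr_exceed_allLe_sub_mul_le [IsProbabilityMeasure P] (hmeas : ∀ i, Measurable (X i))
    {u F ε : ℝ} {p q C : ℕ} (hF : ∀ s, 1 ≤ s → pr P {ω | u < X s ω} = F)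
    (hmix : ExceedanceMixing P X u q C ε) (hε : 0 ≤ ε) (hqp : q ≤ p) {s b : ℕ} (hs : 1 ≤ s)
    (hsb : s + p ≤ b) (hbC : b + q ≤ C) :
    |pr P ({ω | u < X s ω} ∩ allLe X (Set.Icc (s + 1) b) u) -
      pr P ({ω | u < X s ω} ∩ allLe X (Set.Icc (s + 1) (s + p)) u) *
        pr P (allLe X (Set.Icc (s + p + q + 1) b) u)| ≤ F * (q * F + 2 * ε) := by
  set A := {ω | u < X s ω}
  set B := allLe X (Set.Icc (s + 1) (s + p)) u
  set G := allLe X (Set.Icc (s + p + 1) (s + p + q)) u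
  set E := allLe X (Set.Icc (s + p + q + 1) b) u
  set T := A ∩ allLe X (Set.Icc (s + 1) b) u
  have hT : T ⊆ A ∩ B ∩ E := fun ω ⟨hA, hω⟩ =>
    ⟨⟨hA, allLe_mono (Set.Icc_subset_Icc le_rfl (by omega)) u hω⟩,
      allLe_mono (Set.Icc_subset_Icc (by omega) le_rfl) u hω⟩
  have hgap : (A ∩ B ∩ E) \ T ⊆ A ∩ Gᶜ := by
    rintro ω ⟨⟨⟨hA, hB⟩, hE⟩, hnT⟩
    refine ⟨hA, fun hG => hnT ⟨hA, fun j hj => ?_⟩⟩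
    by_cases hjp : j ≤ s + p
    · exact hB j ⟨hj.1, hjp⟩
    by_cases hjq : j ≤ s + p + q
    · exact hG j ⟨by omega, hjq⟩
    · exact hE j ⟨by omega, hj.2⟩
  have hsplit : pr P T + pr P ((A ∩ B ∩ E) \ T) = pr P (A ∩ B ∩ E) := by
    have hTmeas : MeasurableSet T :=
      (measurableSet_exceed hmeas u s).inter (measurableSet_allLe hmeas _ u)
    simpa only [Set.inter_eq_right.2 hT] using pr_inter_add_diff P (A ∩ B ∩ E) hTmeas
  have hA : pr P A = F := hF s hs
  have hAB : pr P (A ∩ B) ≤ F := hA ▸ pr_mono P Set.inter_subset_left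
  have hG : pr P Gᶜ ≤ q * F := by
    simpa using pr_compl_allLe_le P hF (a := s + p + 1) (b := s + p + q) (by omega)
  have hmixAG := hmix s hs (by omega) A Gᶜ (measurableSet_excSigma_exceed hs le_rfl)
    (measurableSet_excSigma_allLe (by omega) (by omega)).compl
  have hmixBE := hmix (s + p) (by omega) (by omega) (A ∩ B) E
    ((measurableSet_excSigma_exceed hs (by omega)).inter
      (measurableSet_excSigma_allLe (by omega) le_rfl))
    (measurableSet_excSigma_allLe (by omega) (by omega))
  have hgap_le : pr P ((A ∩ B ∩ E) \ T) ≤ F * (q * F + ε) := by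
    have := (abs_le.1 hmixAG).2
    calc pr P ((A ∩ B ∩ E) \ T) ≤ pr P (A ∩ Gᶜ) := pr_mono P hgap
      _ ≤ F * (q * F + ε) := by rw [hA] at this; nlinarith [pr_nonneg P A]
  have := abs_le.1 hmixBE
  rw [abs_le]
  constructor <;> nlinarith [pr_nonneg P ((A ∩ B ∩ E) \ T), pr_nonneg P (A ∩ B)]

end Mixing

section BlockTheta

variable {Ω : Type*} [MeasurableSpace Ω] {P : Measure Ω} {X : ℕ → Ω → ℝ}

variable (P X) in
/-- `θ_{s,n}` of the paper, for `u = xₙ` and `p = pₙ`. -/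
noncomputable def blockTheta (u : ℝ) (p s : ℕ) : ℝ :=
  pr P ({ω | u < X s ω} ∩ allLe X (Set.Icc (s + 1) (s + p)) u) / pr P {ω | u < X s ω}

lemma blockTheta_nonneg (u : ℝ) (p s : ℕ) : 0 ≤ blockTheta P X u p s :=
  div_nonneg (pr_nonneg P _) (pr_nonneg P _)

lemma blockTheta_le_one [IsFiniteMeasure P] (u : ℝ) (p s : ℕ) : blockTheta P X u p s ≤ 1 :=
  div_le_one_of_le₀ (pr_mono P Set.inter_subset_left) (pr_nonneg P _)

lemma pr_exceed_mul_blockTheta [IsFiniteMeasure P] (u : ℝ) (p s : ℕ) :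
    pr P {ω | u < X s ω} * blockTheta P X u p s =
      pr P ({ω | u < X s ω} ∩ allLe X (Set.Icc (s + 1) (s + p)) u) := by
  rcases (pr_nonneg P {ω | u < X s ω}).eq_or_lt with h | h
  · rw [← h, zero_mul]
    exact le_antisymm (h ▸ pr_mono P Set.inter_subset_left) (pr_nonneg P _) |>.symm
  · exact mul_div_cancel₀ _ h.ne'

variable [IsProbabilityMeasure P] {u F ε : ℝ} {p q C b : ℕ}

lemma abs_pr_exceed_allLe_sub_le (hmeas : ∀ i, Measurable (X i))
    (hF : ∀ s, 1 ≤ s → pr P {ω | u < X s ω} = F) (hmix : ExceedanceMixing P X u q C ε)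
    (hε : 0 ≤ ε) (hqp : q ≤ p) (hbC : b + q ≤ C) {s : ℕ} (hs : 1 ≤ s) :
    |pr P ({ω | u < X s ω} ∩ allLe X (Set.Icc (s + 1) b) u) -
      F * blockTheta P X u p s * pr P (allLe X (Set.Icc (s + p + q + 1) b) u)| ≤
      F * (q * F + 2 * ε) + if b < s + p then F else 0 := by
  have hblock : F * blockTheta P X u p s =
      pr P ({ω | u < X s ω} ∩ allLe X (Set.Icc (s + 1) (s + p)) u) := by
    rw [← hF s hs, pr_exceed_mul_blockTheta]
  have hF0 : 0 ≤ F := hF s hs ▸ pr_nonneg P _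
  split_ifs with hsb
  · have hT : pr P ({ω | u < X s ω} ∩ allLe X (Set.Icc (s + 1) b) u) ≤ F :=
      hF s hs ▸ pr_mono P Set.inter_subset_left
    have hθE : blockTheta P X u p s * pr P (allLe X (Set.Icc (s + p + q + 1) b) u) ≤ 1 :=
      mul_le_one₀ (blockTheta_le_one u p s) (pr_nonneg P _) (pr_le_one P _)
    rw [mul_assoc]
    refine (abs_sub_le_of_nonneg_of_le (pr_nonneg P _) hT (mul_nonneg hF0
      (mul_nonneg (blockTheta_nonneg u p s) (pr_nonneg P _)))
      (mul_le_of_le_one_right hF0 hθE)).trans (le_add_of_nonneg_left (by positivity))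
  · rw [add_zero, hblock]
    exact abs_pr_exceed_allLe_sub_mul_le hmeas hF hmix hε hqp hs (not_lt.1 hsb) hbC

lemma abs_pr_allLe_sub_renewal_le (hmeas : ∀ i, Measurable (X i))
    (hF : ∀ s, 1 ≤ s → pr P {ω | u < X s ω} = F) (hmix : ExceedanceMixing P X u q C ε)
    (hε : 0 ≤ ε) (hqp : q ≤ p) (hbC : b + q ≤ C) {θ : ℕ → ℝ}
    (hθ : ∀ s ∈ Icc 1 b, |θ s - blockTheta P X u p s| ≤ ε) (a : ℕ) :
    |pr P (allLe X (Set.Icc (a + 1) b) u) -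
      (1 - ∑ s ∈ Icc (a + 1) b, F * θ s * pr P (allLe X (Set.Icc (s + p + q + 1) b) u))| ≤
      b * F * (q * F + 3 * ε) + p * F := by
  set G := fun s => pr P (allLe X (Set.Icc (s + p + q + 1) b) u)
  set T := fun s => pr P ({ω | u < X s ω} ∩ allLe X (Set.Icc (s + 1) b) u)
  have hF0 : 0 ≤ F := hF 1 le_rfl ▸ pr_nonneg P _
  have hterm : ∀ s ∈ Icc (a + 1) b,
      |F * θ s * G s - T s| ≤ F * (q * F + 3 * ε) + if b < s + p then F else 0 := by
    intro s hs
    obtain ⟨hs₁, hsb⟩ := mem_Icc.1 hs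
    have hswap : |F * θ s * G s - F * blockTheta P X u p s * G s| ≤ F * ε := by
      rw [← sub_mul, ← mul_sub, abs_mul, abs_mul, abs_of_nonneg hF0, abs_of_nonneg (pr_nonneg P _)]
      calc F * |θ s - blockTheta P X u p s| * G s ≤ F * ε * 1 :=
            mul_le_mul (mul_le_mul_of_nonneg_left (hθ s (mem_Icc.2 ⟨by omega, hsb⟩))
              hF0) (pr_le_one P _) (pr_nonneg P _) (mul_nonneg hF0 hε)
        _ = F * ε := mul_one _
    calc |F * θ s * G s - T s|
        ≤ |F * θ s * G s - F * blockTheta P X u p s * G s| +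
          |T s - F * blockTheta P X u p s * G s| := by
          rw [abs_sub_comm (T s)]; exact abs_sub_le _ _ _
      _ ≤ F * ε + (F * (q * F + 2 * ε) + if b < s + p then F else 0) :=
          add_le_add hswap (abs_pr_exceed_allLe_sub_le hmeas hF hmix hε hqp hbC (by omega))
      _ = F * (q * F + 3 * ε) + if b < s + p then F else 0 := by ring
  have hboundary : #{s ∈ Icc (a + 1) b | b < s + p} ≤ p := by
    calc #{s ∈ Icc (a + 1) b | b < s + p} ≤ #(Icc (b + 1 - p) b) :=
          card_le_card fun s hs => by simp only [mem_filter, mem_Icc] at hs ⊢; omega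
      _ ≤ p := by simp only [Nat.card_Icc]; omega
  rw [pr_allLe_eq_one_sub_sum_last_exceedance P hmeas u b a, sub_sub_sub_cancel_left,
    ← sum_sub_distrib]
  calc |∑ s ∈ Icc (a + 1) b, (F * θ s * G s - T s)|
      ≤ ∑ s ∈ Icc (a + 1) b, (F * (q * F + 3 * ε) + if b < s + p then F else 0) :=
        (abs_sum_le_sum_abs _ _).trans (sum_le_sum hterm)
    _ ≤ b * F * (q * F + 3 * ε) + p * F := by
        rw [sum_add_distrib, sum_const, nsmul_eq_mul, sum_ite, sum_const_zero, add_zero, sum_const,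
          nsmul_eq_mul, mul_assoc]
        gcongr
        simp only [Nat.card_Icc]; omega

end BlockTheta

section DelayedRenewal

lemma exp_neg_sub_exp_neg_le {y z : ℝ} (hz : 0 ≤ z) (hzy : z ≤ y) :
    exp (-z) - exp (-y) ≤ y - z := by
  have hsplit : exp (-y) = exp (-z) * exp (-(y - z)) := by rw [← exp_add]; ring_nf
  have h1 := one_sub_le_exp_neg (y - z)
  have h2 : exp (-z) ≤ 1 := exp_le_one_iff.2 (neg_nonpos.2 hz)
  nlinarith [exp_pos (-z)]

variable {r : ℕ → ℝ} {b : ℕ}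

lemma sum_Icc_antitone (hr : ∀ s ∈ Icc 1 b, 0 ≤ r s) {a a' : ℕ} (h : a ≤ a') :
    ∑ s ∈ Icc (a' + 1) b, r s ≤ ∑ s ∈ Icc (a + 1) b, r s :=
  sum_le_sum_of_subset_of_nonneg (Icc_subset_Icc (by omega) le_rfl)
    fun s hs _ => hr s (Icc_succ_subset_Icc_one a b hs)

lemma sum_Icc_sub_sum_Icc_add_le {δ : ℝ} (hr : ∀ s ∈ Icc 1 b, r s ≤ δ) (hδ : 0 ≤ δ) (a d : ℕ) :
    ∑ s ∈ Icc (a + 1) b, r s - ∑ s ∈ Icc (a + d + 1) b, r s ≤ d * δ := by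
  rw [← sum_sdiff (Icc_subset_Icc (by omega : a + 1 ≤ a + d + 1) le_rfl), add_sub_cancel_right]
  have hcard : #(Icc (a + 1) b \ Icc (a + d + 1) b) ≤ d := by
    calc #(Icc (a + 1) b \ Icc (a + d + 1) b) ≤ #(Icc (a + 1) (a + d)) :=
          card_le_card fun s hs => by simp only [Finset.mem_sdiff, mem_Icc] at hs ⊢; omega
      _ = d := by simp
  calc ∑ s ∈ Icc (a + 1) b \ Icc (a + d + 1) b, r s
      ≤ #(Icc (a + 1) b \ Icc (a + d + 1) b) • δ := sum_le_card_nsmul _ _ _ fun s hs =>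
        hr s (Icc_succ_subset_Icc_one a b (Finset.mem_sdiff.1 hs).1)
    _ ≤ d * δ := by rw [nsmul_eq_mul]; gcongr

lemma sum_Icc_le_mul {δ : ℝ} (hr : ∀ s ∈ Icc 1 b, r s ≤ δ) (hδ : 0 ≤ δ) (a : ℕ) :
    ∑ s ∈ Icc (a + 1) b, r s ≤ b * δ := by
  simpa [Finset.Icc_eq_empty_of_lt (by omega : b < a + b + 1)] using
    sum_Icc_sub_sum_Icc_add_le hr hδ a b

lemma one_add_sum_mul_exp_le (a : ℕ) :
    1 + ∑ s ∈ Icc (a + 1) b, r s * exp (∑ s' ∈ Icc (s + 1) b, r s') ≤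
      exp (∑ s ∈ Icc (a + 1) b, r s) := by
  induction a using Nat.strong_decreasing_induction_of_forall_ge b with
  | base a ha => simp [Finset.Icc_eq_empty_of_lt (Nat.lt_succ_of_le ha)]
  | step a ha ih =>
    have ih := ih (a + 1) (Nat.lt_succ_self a)
    rw [sum_Icc_succ_eq_add _ ha, sum_Icc_succ_eq_add _ ha, exp_add]
    nlinarith [add_one_le_exp (r (a + 1)), exp_pos (∑ s ∈ Icc (a + 1 + 1) b, r s)]

/-- Discrete Gronwall inequality for a backward recursion with delay `d`. -/
lemma abs_le_mul_exp_of_abs_le_add_sum {e : ℕ → ℝ} {D : ℝ} (d : ℕ) (hD : 0 ≤ D)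
    (hr : ∀ s ∈ Icc 1 b, 0 ≤ r s)
    (he : ∀ a, |e a| ≤ D + ∑ s ∈ Icc (a + 1) b, r s * |e (s + d)|) (a : ℕ) :
    |e a| ≤ D * exp (∑ s ∈ Icc (a + 1) b, r s) := by
  induction a using Nat.strong_decreasing_induction_of_forall_ge b with
  | base a ha => simpa [Finset.Icc_eq_empty_of_lt (Nat.lt_succ_of_le ha)] using he a
  | step a ha ih =>
    have hterm : ∀ s ∈ Icc (a + 1) b, r s * |e (s + d)| ≤
        D * (r s * exp (∑ s' ∈ Icc (s + 1) b, r s')) := by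
      intro s hs
      have hs' := mem_Icc.1 hs
      calc r s * |e (s + d)| ≤ r s * (D * exp (∑ s' ∈ Icc (s + 1) b, r s')) := by
            refine mul_le_mul_of_nonneg_left ((ih (s + d) (by omega)).trans ?_)
              (hr s (Icc_succ_subset_Icc_one a b hs))
            exact mul_le_mul_of_nonneg_left
              (exp_le_exp.2 (sum_Icc_antitone hr (Nat.le_add_right s d))) hD
        _ = D * (r s * exp (∑ s' ∈ Icc (s + 1) b, r s')) := by ring
    calc |e a| ≤ D + ∑ s ∈ Icc (a + 1) b, D * (r s * exp (∑ s' ∈ Icc (s + 1) b, r s')) :=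
          (he a).trans (add_le_add le_rfl (sum_le_sum hterm))
      _ = D * (1 + ∑ s ∈ Icc (a + 1) b, r s * exp (∑ s' ∈ Icc (s + 1) b, r s')) := by
          rw [← mul_sum]; ring
      _ ≤ D * exp (∑ s ∈ Icc (a + 1) b, r s) :=
          mul_le_mul_of_nonneg_left (one_add_sum_mul_exp_le a) hD

lemma abs_exp_neg_add_sub_add_mul_exp_neg_le {x y z δ : ℝ} {d : ℕ} (hx₀ : 0 ≤ x) (hxδ : x ≤ δ)
    (hδ₁ : δ ≤ 1) (hz : 0 ≤ z) (hzy : z ≤ y) (hyz : y - z ≤ d * δ) :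
    |exp (-(x + y)) - exp (-y) + x * exp (-z)| ≤ (1 + d) * δ * x := by
  have hquad : |exp (-x) - 1 - -x| ≤ x * δ := by
    refine (abs_exp_sub_one_sub_id_le (by rw [abs_neg, abs_of_nonneg hx₀]; linarith)).trans ?_
    nlinarith
  have hlip : |exp (-z) - exp (-y)| ≤ d * δ := by
    rw [abs_of_nonneg (sub_nonneg.2 (exp_le_exp.2 (neg_le_neg hzy)))]
    exact (exp_neg_sub_exp_neg_le hz hzy).trans hyz
  have hexpy : exp (-y) ≤ 1 := exp_le_one_iff.2 (neg_nonpos.2 (hz.trans hzy))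
  calc |exp (-(x + y)) - exp (-y) + x * exp (-z)|
      = |exp (-y) * (exp (-x) - 1 - -x) + x * (exp (-z) - exp (-y))| := by
        rw [neg_add, exp_add]; ring_nf
    _ ≤ |exp (-y) * (exp (-x) - 1 - -x)| + |x * (exp (-z) - exp (-y))| := abs_add_le _ _
    _ ≤ 1 * (x * δ) + x * (d * δ) := by
        rw [abs_mul, abs_mul, abs_of_pos (exp_pos _), abs_of_nonneg hx₀]
        gcongr
    _ = (1 + d) * δ * x := by ring

lemma abs_exp_neg_sum_sub_renewal_le {δ : ℝ} (d : ℕ) (hr : ∀ s ∈ Icc 1 b, 0 ≤ r s ∧ r s ≤ δ)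
    (hδ₀ : 0 ≤ δ) (hδ₁ : δ ≤ 1) (a : ℕ) :
    |exp (-∑ s ∈ Icc (a + 1) b, r s) -
      (1 - ∑ s ∈ Icc (a + 1) b, r s * exp (-∑ s' ∈ Icc (s + d + 1) b, r s'))| ≤
      (1 + d) * δ * ∑ s ∈ Icc (a + 1) b, r s := by
  induction a using Nat.strong_decreasing_induction_of_forall_ge b with
  | base a ha => simp [Finset.Icc_eq_empty_of_lt (Nat.lt_succ_of_le ha)]
  | step a ha ih =>
    have ih := ih (a + 1) (Nat.lt_succ_self a)
    obtain ⟨hx₀, hxδ⟩ := hr (a + 1) (mem_Icc.2 ⟨by omega, ha⟩)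
    rw [sum_Icc_succ_eq_add _ ha, sum_Icc_succ_eq_add _ ha]
    set x := r (a + 1)
    set y := ∑ s ∈ Icc (a + 1 + 1) b, r s
    set z := ∑ s ∈ Icc (a + 1 + d + 1) b, r s
    have hz : 0 ≤ z := sum_nonneg fun s hs => (hr s (Icc_succ_subset_Icc_one _ b hs)).1
    have hzy : z ≤ y := sum_Icc_antitone (fun s hs => (hr s hs).1) (Nat.le_add_right _ d)
    have hyz : y - z ≤ d * δ := sum_Icc_sub_sum_Icc_add_le (fun s hs => (hr s hs).2) hδ₀ _ d
    calc _ = |(exp (-y) - (1 - ∑ s ∈ Icc (a + 1 + 1) b, r s *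
              exp (-∑ s' ∈ Icc (s + d + 1) b, r s'))) +
            (exp (-(x + y)) - exp (-y) + x * exp (-z))| := by congr 1; ring
      _ ≤ (1 + d) * δ * y + (1 + d) * δ * x := (abs_add_le _ _).trans
          (add_le_add ih (abs_exp_neg_add_sub_add_mul_exp_neg_le hx₀ hxδ hδ₁ hz hzy hyz))
      _ = (1 + d) * δ * (x + y) := by ring

/-- `exp (-∑_{a < s ≤ b} r s)` solves the same renewal equation up to `O(d δ ∑ r)`; then
Gronwall. -/
theorem abs_sub_exp_neg_sum_le_of_renewal {g : ℕ → ℝ} {d : ℕ} {δ D : ℝ}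
    (hr : ∀ s ∈ Icc 1 b, 0 ≤ r s ∧ r s ≤ δ) (hδ₀ : 0 ≤ δ) (hδ₁ : δ ≤ 1) (hD : 0 ≤ D)
    (hg : ∀ a, |g a - (1 - ∑ s ∈ Icc (a + 1) b, r s * g (s + d))| ≤ D) (a : ℕ) :
    |g a - exp (-∑ s ∈ Icc (a + 1) b, r s)| ≤ (D + (1 + d) * δ * (b * δ)) * exp (b * δ) := by
  set h := fun a => exp (-∑ s ∈ Icc (a + 1) b, r s)
  have hD' : 0 ≤ D + (1 + d) * δ * (b * δ) := by positivity
  have he : ∀ a, |g a - h a| ≤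
      D + (1 + d) * δ * (b * δ) + ∑ s ∈ Icc (a + 1) b, r s * |g (s + d) - h (s + d)| := by
    intro a
    have hh := abs_exp_neg_sum_sub_renewal_le d hr hδ₀ hδ₁ a
    have hS : (1 + d) * δ * ∑ s ∈ Icc (a + 1) b, r s ≤ (1 + d) * δ * (b * δ) :=
      mul_le_mul_of_nonneg_left (sum_Icc_le_mul (fun s hs => (hr s hs).2) hδ₀ a) (by positivity)
    have hsum : |∑ s ∈ Icc (a + 1) b, r s * (h (s + d) - g (s + d))| ≤
        ∑ s ∈ Icc (a + 1) b, r s * |g (s + d) - h (s + d)| := by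
      refine (abs_sum_le_sum_abs _ _).trans (sum_le_sum fun s hs => ?_)
      rw [abs_mul, abs_sub_comm, abs_of_nonneg (hr s (Icc_succ_subset_Icc_one a b hs)).1]
    calc |g a - h a|
        = |(g a - (1 - ∑ s ∈ Icc (a + 1) b, r s * g (s + d))) -
            (h a - (1 - ∑ s ∈ Icc (a + 1) b, r s * h (s + d))) +
            ∑ s ∈ Icc (a + 1) b, r s * (h (s + d) - g (s + d))| := by
          congr 1; simp only [mul_sub, sum_sub_distrib]; ring
      _ ≤ D + (1 + d) * δ * (b * δ) + ∑ s ∈ Icc (a + 1) b, r s * |g (s + d) - h (s + d)| := by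
          refine (abs_add_le _ _).trans (add_le_add ((abs_sub _ _).trans ?_) hsum)
          exact add_le_add (hg a) (hh.trans hS)
  calc |g a - h a| ≤ (D + (1 + d) * δ * (b * δ)) * exp (∑ s ∈ Icc (a + 1) b, r s) :=
        abs_le_mul_exp_of_abs_le_add_sum d hD' (fun s hs => (hr s hs).1) he a
    _ ≤ (D + (1 + d) * δ * (b * δ)) * exp (b * δ) := by
        gcongr
        exact sum_Icc_le_mul (fun s hs => (hr s hs).2) hδ₀ a

end DelayedRenewal

section Asymptotics

lemma tendsto_zero_of_forall_eventually_abs_le {α : Type*} {l : Filter α} {f : α → ℝ}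
    {C : ℝ → α → ℝ} {K : ℝ} (hC : ∀ ε > 0, Tendsto (C ε) l (𝓝 (K * ε)))
    (hf : ∀ ε > 0, ∀ᶠ x in l, |f x| ≤ C ε x) : Tendsto f l (𝓝 0) := by
  rw [Metric.tendsto_nhds]
  intro η hη
  set ε := η / (2 * (|K| + 1))
  have hε : 0 < ε := by positivity
  have hKε : K * ε < η / 2 := by
    calc K * ε ≤ |K| * ε := mul_le_mul_of_nonneg_right (le_abs_self K) hε.le
      _ < (|K| + 1) * ε := by nlinarith
      _ = η / 2 := by simp only [ε]; field_simp
  filter_upwards [hf ε hε, (hC ε hε).eventually (eventually_lt_nhds hKε)]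
    with x hfx hCx
  rw [Real.dist_eq, sub_zero]
  linarith

variable {F : ℕ → ℝ}

lemma tendsto_mul_zero_of_isLittleO {f : ℕ → ℝ} {τ : ℝ} (hf : f =o[atTop] (fun n : ℕ => (n : ℝ)))
    (hF : Tendsto (fun n : ℕ => n * F n) atTop (𝓝 τ)) :
    Tendsto (fun n => f n * F n) atTop (𝓝 0) := by
  have := hf.tendsto_div_nhds_zero.mul hF
  rw [zero_mul] at this
  refine this.congr' ((eventually_ne_atTop 0).mono fun n hn => ?_)
  field_simp

lemma tendsto_zero_of_tendsto_natCast_mul {τ : ℝ}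
    (hF : Tendsto (fun n : ℕ => n * F n) atTop (𝓝 τ)) : Tendsto F atTop (𝓝 0) := by
  simpa using tendsto_mul_zero_of_isLittleO ((isLittleO_one_left_iff ℝ).2
    (tendsto_norm_atTop_atTop.comp tendsto_natCast_atTop_atTop)) hF

lemma eventually_le_of_tendsto_mul {a a' : ℕ → ℝ} {s s' : ℝ} (hF₀ : ∀ n, 0 < F n)
    (ha : Tendsto (fun n => a n * F n) atTop (𝓝 s))
    (ha' : Tendsto (fun n => a' n * F n) atTop (𝓝 s')) (hs : s < s') : ∀ᶠ n in atTop, a n ≤ a' n :=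
  (ha.eventually_lt ha' hs).mono fun n hn => (mul_lt_mul_iff_left₀ (hF₀ n)).1 hn |>.le

lemma eventually_le_ceil_mul {a : ℕ → ℕ} {t τ c : ℝ} (hF₀ : ∀ n, 0 < F n)
    (ha : Tendsto (fun n => (a n : ℝ) * F n) atTop (𝓝 t))
    (hF : Tendsto (fun n : ℕ => n * F n) atTop (𝓝 τ)) (htc : t < c * τ) :
    ∀ᶠ n in atTop, a n ≤ ⌈c * n⌉₊ :=
  (eventually_le_of_tendsto_mul hF₀ ha ((hF.const_mul c).congr fun n => by ring) htc).mono
    fun n hn => Nat.cast_le.1 (hn.trans (Nat.le_ceil _))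

lemma tendsto_inv_atTop_of_tendsto_zero (hF₀ : ∀ n, 0 < F n) (hF : Tendsto F atTop (𝓝 0)) :
    Tendsto (fun n => (F n)⁻¹) atTop atTop :=
  (tendsto_nhdsWithin_iff.2 ⟨hF, Eventually.of_forall hF₀⟩).inv_tendsto_nhdsGT_zero

lemma tendsto_add_floor_div_atTop (hF₀ : ∀ n, 0 < F n) (hF : Tendsto F atTop (𝓝 0)) (i : ℕ)
    {t : ℝ} (ht : 0 < t) : Tendsto (fun n => i + ⌊t / F n⌋₊) atTop atTop :=
  tendsto_atTop_mono (fun _ => Nat.le_add_left _ i) <| tendsto_nat_floor_atTop.comp <|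
    (tendsto_inv_atTop_of_tendsto_zero hF₀ hF).const_mul_atTop ht

lemma tendsto_add_floor_div_mul (hF₀ : ∀ n, 0 < F n) (hF : Tendsto F atTop (𝓝 0)) (i : ℕ)
    {t : ℝ} (ht : 0 ≤ t) :
    Tendsto (fun n => ((i + ⌊t / F n⌋₊ : ℕ) : ℝ) * F n) atTop (𝓝 t) := by
  have hfloor := (tendsto_nat_floor_mul_div_atTop ht).comp
    (tendsto_inv_atTop_of_tendsto_zero hF₀ hF)
  have := (hF.const_mul (i : ℝ)).add hfloor
  rw [mul_zero, zero_add] at this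
  refine this.congr fun n => ?_
  simp only [Function.comp_apply, div_inv_eq_mul, ← div_eq_mul_inv, Nat.cast_add]
  ring

lemma tendsto_sum_mul_of_cesaro {θ : ℕ → ℝ} {w b : ℕ → ℕ} {γ t : ℝ}
    (hθ : ∀ s, 1 ≤ s → |θ s| ≤ 1)
    (hces : Tendsto (fun N : ℕ => (N : ℝ)⁻¹ * ∑ s ∈ Icc 1 N, θ s) atTop (𝓝 γ))
    (hF₀ : ∀ n, 0 ≤ F n) (hb : Tendsto b atTop atTop)
    (hbF : Tendsto (fun n => (b n : ℝ) * F n) atTop (𝓝 t))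
    (hwF : Tendsto (fun n => (w n : ℝ) * F n) atTop (𝓝 0)) (hwb : ∀ᶠ n in atTop, w n ≤ b n) :
    Tendsto (fun n => ∑ s ∈ Icc (w n + 1) (b n), F n * θ s) atTop (𝓝 (t * γ)) := by
  have hfull : Tendsto (fun n => F n * ∑ s ∈ Icc 1 (b n), θ s) atTop (𝓝 (t * γ)) := by
    refine (hbF.mul (hces.comp hb)).congr' ((hb.eventually_ne_atTop 0).mono fun n hn => ?_)
    simp only [Function.comp_apply]
    field_simp
  have hhead : Tendsto (fun n => F n * ∑ s ∈ Icc 1 (w n), θ s) atTop (𝓝 0) := by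
    refine squeeze_zero_norm (fun n => ?_) hwF
    rw [Real.norm_eq_abs, abs_mul, abs_of_nonneg (hF₀ n), mul_comm]
    refine mul_le_mul_of_nonneg_right ((abs_sum_le_sum_abs _ _).trans ?_) (hF₀ n)
    simpa using sum_le_card_nsmul _ _ 1 fun s hs => hθ s (mem_Icc.1 hs).1
  have := hfull.sub hhead
  rw [sub_zero] at this
  refine this.congr' (hwb.mono fun n hn => ?_)
  have hsplit := sum_Ioc_consecutive θ (Nat.zero_le (w n)) hn
  simp only [← Icc_add_one_left_eq_Ioc, zero_add] at hsplit
  rw [← mul_sub, ← hsplit, add_sub_cancel_left, mul_sum]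

end Asymptotics

section Limits

variable {Ω : Type*} [MeasurableSpace Ω] {P : Measure Ω} [IsProbabilityMeasure P]
  {X : ℕ → Ω → ℝ} {u F : ℕ → ℝ} {p q b C : ℕ → ℕ}

lemma tendsto_pr_allLe_sub_exp_neg_sum (hmeas : ∀ i, Measurable (X i))
    (hF : ∀ n s, 1 ≤ s → pr P {ω | u n < X s ω} = F n) (hF₀ : ∀ n, 0 < F n)
    (hmix : ∀ ε > 0, ∀ᶠ n in atTop, ExceedanceMixing P X (u n) (q n) (C n) ε)
    {θ : ℕ → ℝ} (hθ : ∀ s, 1 ≤ s → 0 ≤ θ s ∧ θ s ≤ 1)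
    (hunif : ∀ ε > 0, ∀ᶠ n in atTop, ∀ s ∈ Icc 1 (b n), |θ s - blockTheta P X (u n) (p n) s| ≤ ε)
    (hqp : ∀ᶠ n in atTop, q n ≤ p n) (hbC : ∀ᶠ n in atTop, b n + q n ≤ C n) {t : ℝ}
    (hF0 : Tendsto F atTop (𝓝 0)) (hbF : Tendsto (fun n => (b n : ℝ) * F n) atTop (𝓝 t))
    (hpF : Tendsto (fun n => (p n : ℝ) * F n) atTop (𝓝 0))
    (hqF : Tendsto (fun n => (q n : ℝ) * F n) atTop (𝓝 0)) (w : ℕ → ℕ) :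
    Tendsto (fun n => pr P (allLe X (Set.Icc (w n + 1) (b n)) (u n)) -
      exp (-∑ s ∈ Icc (w n + 1) (b n), F n * θ s)) atTop (𝓝 0) := by
  set bound : ℝ → ℕ → ℝ := fun ε n =>
    (b n * F n * (q n * F n + 3 * ε) + p n * F n +
      (1 + ((p n + q n : ℕ) : ℝ)) * F n * (b n * F n)) * exp (b n * F n)
  refine tendsto_zero_of_forall_eventually_abs_le (C := bound) (K := 3 * t * exp t) ?_ ?_
  · intro ε _
    have := ((hbF.mul (hqF.add_const (3 * ε))).add hpF |>.add
      (((hF0.add hpF).add hqF).mul hbF)).mul ((continuous_exp.tendsto t).comp hbF)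
    convert this using 2 with n
    · simp only [bound, Function.comp_apply]; push_cast; ring
    · ring
  · intro ε hε
    filter_upwards [hmix ε hε, hunif ε hε, hqp, hbC] with n hmixn hunifn hqpn hbCn
    have hr : ∀ s ∈ Icc 1 (b n), 0 ≤ F n * θ s ∧ F n * θ s ≤ F n := fun s hs =>
      ⟨mul_nonneg (hF₀ n).le (hθ s (mem_Icc.1 hs).1).1,
        mul_le_of_le_one_right (hF₀ n).le (hθ s (mem_Icc.1 hs).1).2⟩
    have hF₁ : F n ≤ 1 := hF n 1 le_rfl ▸ pr_le_one P _
    have hD : 0 ≤ b n * F n * (q n * F n + 3 * ε) + p n * F n := by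
      have := (hF₀ n).le; positivity
    refine abs_sub_exp_neg_sum_le_of_renewal
      (g := fun a => pr P (allLe X (Set.Icc (a + 1) (b n)) (u n))) (d := p n + q n)
      hr (hF₀ n).le hF₁ hD (fun a => ?_) (w n)
    simpa only [add_assoc] using abs_pr_allLe_sub_renewal_le hmeas (hF n) hmixn hε.le hqpn hbCn
      hunifn a

lemma tendsto_pr_exceed_allLe_div_sub (hmeas : ∀ i, Measurable (X i))
    (hF : ∀ n s, 1 ≤ s → pr P {ω | u n < X s ω} = F n) (hF₀ : ∀ n, 0 < F n)
    (hmix : ∀ ε > 0, ∀ᶠ n in atTop, ExceedanceMixing P X (u n) (q n) (C n) ε)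
    (hqp : ∀ᶠ n in atTop, q n ≤ p n) (hbC : ∀ᶠ n in atTop, b n + q n ≤ C n) {i : ℕ} (hi : 1 ≤ i)
    (hpb : ∀ᶠ n in atTop, i + p n ≤ b n) (hqF : Tendsto (fun n => (q n : ℝ) * F n) atTop (𝓝 0)) :
    Tendsto (fun n => pr P ({ω | u n < X i ω} ∩ allLe X (Set.Icc (i + 1) (b n)) (u n)) / F n -
      blockTheta P X (u n) (p n) i * pr P (allLe X (Set.Icc (i + p n + q n + 1) (b n)) (u n)))
      atTop (𝓝 0) := by
  refine tendsto_zero_of_forall_eventually_abs_le (C := fun ε n => q n * F n + 2 * ε) (K := 2)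
    (fun ε _ => by simpa using hqF.add_const (2 * ε)) fun ε hε => ?_
  filter_upwards [hmix ε hε, hqp, hbC, hpb] with n hmixn hqpn hbCn hpbn
  have := abs_pr_exceed_allLe_sub_le hmeas (hF n) hmixn hε.le hqpn hbCn hi
  rw [if_neg (not_lt.2 hpbn), add_zero, mul_assoc] at this
  rw [← mul_div_cancel_left₀ (blockTheta P X (u n) (p n) i * _) (hF₀ n).ne', ← sub_div, abs_div,
    abs_of_pos (hF₀ n), div_le_iff₀ (hF₀ n)]
  linarith

theorem tendsto_pr_exceed_allLe_div (hmeas : ∀ i, Measurable (X i))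
    (hF : ∀ n s, 1 ≤ s → pr P {ω | u n < X s ω} = F n) (hF₀ : ∀ n, 0 < F n)
    (hmix : ∀ ε > 0, ∀ᶠ n in atTop, ExceedanceMixing P X (u n) (q n) (C n) ε)
    {θ : ℕ → ℝ} (hθ : ∀ s, 1 ≤ s → 0 ≤ θ s ∧ θ s ≤ 1)
    (hunif : ∀ ε > 0, ∀ᶠ n in atTop, ∀ s ∈ Icc 1 (b n), |θ s - blockTheta P X (u n) (p n) s| ≤ ε)
    (hqp : ∀ᶠ n in atTop, q n ≤ p n) (hbC : ∀ᶠ n in atTop, b n + p n + q n ≤ C n) {t : ℝ}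
    (ht : 0 < t) (hF0 : Tendsto F atTop (𝓝 0)) (hb : Tendsto b atTop atTop)
    (hbF : Tendsto (fun n => (b n : ℝ) * F n) atTop (𝓝 t))
    (hpF : Tendsto (fun n => (p n : ℝ) * F n) atTop (𝓝 0))
    (hqF : Tendsto (fun n => (q n : ℝ) * F n) atTop (𝓝 0)) {i : ℕ} (hi : 1 ≤ i)
    (hθi : Tendsto (fun n => blockTheta P X (u n) (p n) i) atTop (𝓝 (θ i))) {γ : ℝ}
    (hces : Tendsto (fun N : ℕ => (N : ℝ)⁻¹ * ∑ s ∈ Icc 1 N, θ s) atTop (𝓝 γ)) :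
    Tendsto (fun n => pr P ({ω | u n < X i ω} ∩ allLe X (Set.Icc (i + 1) (b n)) (u n)) / F n)
      atTop (𝓝 (θ i * exp (-(γ * t)))) := by
  set w : ℕ → ℕ := fun n => i + p n + q n
  have hwF : Tendsto (fun n => (w n : ℝ) * F n) atTop (𝓝 0) := by
    simpa using (((hF0.const_mul (i : ℝ)).add hpF).add hqF).congr fun n => by simp [w]; ring
  have hwb : ∀ᶠ n in atTop, w n ≤ b n :=
    (eventually_le_of_tendsto_mul hF₀ hwF hbF ht).mono fun n hn => Nat.cast_le.1 hn
  have hbqC : ∀ᶠ n in atTop, b n + q n ≤ C n := hbC.mono fun n hn => by omega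
  have hH := tendsto_sum_mul_of_cesaro
    (fun s hs => abs_le.2 ⟨by linarith [(hθ s hs).1], (hθ s hs).2⟩) hces
    (fun n => (hF₀ n).le) hb hbF hwF hwb
  have hG := tendsto_pr_allLe_sub_exp_neg_sum hmeas hF hF₀ hmix hθ hunif hqp hbqC hF0 hbF hpF hqF w
  have hfront := tendsto_pr_exceed_allLe_div_sub hmeas hF hF₀ hmix hqp hbqC hi
    (hwb.mono fun n hn => by simp only [w] at hn; omega) hqF
  have hlim := hfront.add (hθi.mul (hG.add ((continuous_exp.tendsto _).comp hH.neg)))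
  rw [zero_add, zero_add, mul_comm t γ] at hlim
  exact hlim.congr fun n => by simp only [Function.comp_apply, w]; ring

end Limits

lemma setOf_forall_mul_le_eq_allLe {Ω : Type*} {X : ℕ → Ω → ℝ} {F t : ℝ} (hF : 0 < F)
    (ht : 0 ≤ t) (i : ℕ) (u : ℝ) :
    {ω | ∀ m : ℕ, 1 ≤ m → F * m ≤ t → X (m + i) ω ≤ u} =
      allLe X (Set.Icc (i + 1) (i + ⌊t / F⌋₊)) u := by
  have hm : ∀ m : ℕ, F * m ≤ t ↔ m ≤ ⌊t / F⌋₊ := fun m => by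
    rw [Nat.le_floor_iff (div_nonneg ht hF.le), le_div_iff₀ hF, mul_comm]
  ext ω
  simp only [allLe, Set.mem_ofPred_eq, Set.mem_Icc, hm]
  constructor
  · rintro h j ⟨hj₁, hj₂⟩
    simpa [Nat.sub_add_cancel (by omega : i ≤ j)] using h (j - i) (by omega) (by omega)
  · exact fun h m hm₁ hm₂ => h (m + i) ⟨by omega, by omega⟩

theorem stmt9_general {Ω : Type*} [MeasurableSpace Ω] (P : Measure Ω) [IsProbabilityMeasure P]
    (X : ℕ → Ω → ℝ) (F : ℝ → ℝ) (xs : ℕ → ℝ) (q : ℕ → ℕ) (p : ℕ → ℕ)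
    (τ : ℝ) (hτ : 0 < τ)
    (hmeas : ∀ i, Measurable (X i))
    (hF : ∀ i, 1 ≤ i → ∀ t : ℝ, pr P {ω | X i ω ≤ t} = F t)
    (hFbarpos : ∀ n, 0 < 1 - F (xs n))
    (hFbar : Tendsto (fun n : ℕ => (n : ℝ) * (1 - F (xs n))) atTop (nhds τ))
    (hq : (fun n : ℕ => (q n : ℝ)) =o[atTop] (fun n : ℕ => (n : ℝ)))
    (hmix : ∀ c : ℝ, 0 < c → ∀ ε : ℝ, 0 < ε → ∀ᶠ n : ℕ in atTop,
      ∀ l : ℕ, 1 ≤ l → l + q n ≤ ⌈c * n⌉₊ →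
        ∀ E₁ E₂ : Set Ω, MeasurableSet[excSigma X (xs n) 1 l] E₁ →
          MeasurableSet[excSigma X (xs n) (l + q n) ⌈c * n⌉₊] E₂ →
          0 < pr P E₁ → |pr P (E₁ ∩ E₂) / pr P E₁ - pr P E₂| < ε)
    (hp : (fun n : ℕ => (p n : ℝ)) =o[atTop] (fun n : ℕ => (n : ℝ)))
    (hqp : (fun n : ℕ => (q n : ℝ)) =o[atTop] (fun n : ℕ => (p n : ℝ)))
    (θin : ℕ → ℕ → ℝ)
    (hθin : ∀ i n : ℕ, θin i n =
      pr P ({ω | xs n < X i ω} ∩ allLe X (Set.Icc (i + 1) (i + p n)) (xs n)) /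
        pr P {ω | xs n < X i ω})
    (θ : ℕ → ℝ)
    (hθlim : ∀ i : ℕ, 1 ≤ i → Tendsto (fun n => θin i n) atTop (nhds (θ i)))
    (hunif : ∀ c : ℝ, 0 < c → ∀ ε : ℝ, 0 < ε → ∀ᶠ n : ℕ in atTop,
      ∀ i : ℕ, 1 ≤ i → i ≤ ⌈c * n⌉₊ → |θ i - θin i n| < ε)
    (γ : ℝ)
    (hcesaro : Tendsto (fun n : ℕ => (n : ℝ)⁻¹ * ∑ i ∈ Finset.Icc 1 n, θ i)
      atTop (nhds γ)) :
    ∀ i : ℕ, 1 ≤ i → ∀ t : ℝ, 0 < t →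
      Tendsto (fun n : ℕ =>
        pr P ({ω | xs n < X i ω} ∩
            {ω | ∀ m : ℕ, 1 ≤ m → (1 - F (xs n)) * m ≤ t → X (m + i) ω ≤ xs n}) /
          pr P {ω | xs n < X i ω})
        atTop (nhds (θ i * Real.exp (-(γ * t)))) := by
  intro i hi t ht
  obtain rfl : θin = fun s n => blockTheta P X (xs n) (p n) s := funext₂ hθin
  set Fbar : ℕ → ℝ := fun n => 1 - F (xs n)
  set b : ℕ → ℕ := fun n => i + ⌊t / Fbar n⌋₊
  set c : ℝ := 2 * t / τ
  have hc : 0 < c := by positivity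
  have hexc : ∀ n s, 1 ≤ s → pr P {ω | xs n < X s ω} = Fbar n := fun n s hs => by
    rw [pr_lt_eq_one_sub P (hmeas s), hF s hs]
  have hF0 : Tendsto Fbar atTop (𝓝 0) := tendsto_zero_of_tendsto_natCast_mul hFbar
  have hbF := tendsto_add_floor_div_mul hFbarpos hF0 i ht.le
  have hpF := tendsto_mul_zero_of_isLittleO hp hFbar
  have hqF := tendsto_mul_zero_of_isLittleO hq hFbar
  -- the mixing window `{1, …, ⌈c n⌉}` eventually contains `(0, b + p + q]`, as `c τ = 2 t > t`
  have hbC : ∀ᶠ n in atTop, b n + p n + q n ≤ ⌈c * n⌉₊ :=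
    eventually_le_ceil_mul hFbarpos (by simpa using ((hbF.add hpF).add hqF).congr fun n => by ring)
      hFbar (by simp only [c]; field_simp; linarith)
  have hθ01 : ∀ s, 1 ≤ s → 0 ≤ θ s ∧ θ s ≤ 1 := fun s hs =>
    ⟨ge_of_tendsto' (hθlim s hs) fun n => blockTheta_nonneg _ _ _,
      le_of_tendsto' (hθlim s hs) fun n => blockTheta_le_one _ _ _⟩
  refine (tendsto_pr_exceed_allLe_div hmeas hexc hFbarpos
    (fun ε hε => (hmix c hc ε hε).mono fun n hn => exceedanceMixing_of_cond hn) hθ01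
    (fun ε hε => ((hunif c hc ε hε).and hbC).mono fun n hn s hs =>
      (hn.1 s (mem_Icc.1 hs).1 (by have := (mem_Icc.1 hs).2; omega)).le)
    (hqp.eventuallyLE.mono fun n hn => by simpa using hn) hbC ht hF0
    (tendsto_add_floor_div_atTop hFbarpos hF0 i ht) hbF hpF hqF hi (hθlim i hi) hcesaro).congr
    fun n => ?_
  rw [setOf_forall_mul_le_eq_allLe (hFbarpos n) ht.le, hexc n i hi]

/-- Theorem IntExcThm: with `n·F̄(xₙ) → τ > 0`, a separation sequence
`qₙ = o(n)` with `α*_{⌈cn⌉,qₙ}(xₙ) → 0` for every `c > 0` (stated in ε-form), AIM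
coefficients `α` with `n·αₙ = o(pₙ)`, `pₙ = o(n)`, `qₙ = o(pₙ)`,
`θ_{i,n} = P(M_{i,i+pₙ} ≤ xₙ | X_i > xₙ) → θ_i`, `max_{1≤i≤⌈cn⌉}|θ_i − θ_{i,n}| → 0`
for every `c > 0`, and Cesàro means of `(θ_i)` converging to `γ`: for each fixed
`i ≥ 1` and `t > 0`, `P(F̄(xₙ)·T_i(xₙ) > t | X_i > xₙ) → θ_i·e^{−γt}`. -/
theorem stmt9 {Ω : Type*} [MeasurableSpace Ω] (P : Measure Ω) [IsProbabilityMeasure P]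
    (X : ℕ → Ω → ℝ) (F : ℝ → ℝ) (xs : ℕ → ℝ) (q : ℕ → ℕ) (α : ℕ → ℝ) (p : ℕ → ℕ)
    (τ : ℝ) (hτ : 0 < τ)
    (hmeas : ∀ i, Measurable (X i))
    (hF : ∀ i, 1 ≤ i → ∀ t : ℝ, pr P {ω | X i ω ≤ t} = F t)
    (hFbarpos : ∀ n, 0 < 1 - F (xs n))
    (hFbar : Tendsto (fun n : ℕ => (n : ℝ) * (1 - F (xs n))) atTop (nhds τ))
    (hqpos : ∀ m, 1 ≤ q m)
    (hq : (fun n : ℕ => (q n : ℝ)) =o[atTop] (fun n : ℕ => (n : ℝ)))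
    (hmix : ∀ c : ℝ, 0 < c → ∀ ε : ℝ, 0 < ε → ∀ᶠ n : ℕ in atTop,
      ∀ l : ℕ, 1 ≤ l → l + q n ≤ ⌈c * n⌉₊ →
        ∀ E₁ E₂ : Set Ω, MeasurableSet[excSigma X (xs n) 1 l] E₁ →
          MeasurableSet[excSigma X (xs n) (l + q n) ⌈c * n⌉₊] E₂ →
          0 < pr P E₁ → |pr P (E₁ ∩ E₂) / pr P E₁ - pr P E₂| < ε)
    (hα : Tendsto α atTop (nhds 0))
    (hbd : AIMBound P X xs q α)
    (hppos : ∀ m, 1 ≤ p m)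
    (hp : (fun n : ℕ => (p n : ℝ)) =o[atTop] (fun n : ℕ => (n : ℝ)))
    (hnα : (fun n : ℕ => (n : ℝ) * α n) =o[atTop] (fun n : ℕ => (p n : ℝ)))
    (hqp : (fun n : ℕ => (q n : ℝ)) =o[atTop] (fun n : ℕ => (p n : ℝ)))
    (θin : ℕ → ℕ → ℝ)
    (hθin : ∀ i n : ℕ, θin i n =
      pr P ({ω | xs n < X i ω} ∩ allLe X (Set.Icc (i + 1) (i + p n)) (xs n)) /
        pr P {ω | xs n < X i ω})
    (θ : ℕ → ℝ)
    (hθlim : ∀ i : ℕ, 1 ≤ i → Tendsto (fun n => θin i n) atTop (nhds (θ i)))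
    (hunif : ∀ c : ℝ, 0 < c → ∀ ε : ℝ, 0 < ε → ∀ᶠ n : ℕ in atTop,
      ∀ i : ℕ, 1 ≤ i → i ≤ ⌈c * n⌉₊ → |θ i - θin i n| < ε)
    (γ : ℝ)
    (hcesaro : Tendsto (fun n : ℕ => (n : ℝ)⁻¹ * ∑ i ∈ Finset.Icc 1 n, θ i)
      atTop (nhds γ)) :
    ∀ i : ℕ, 1 ≤ i → ∀ t : ℝ, 0 < t →
      Tendsto (fun n : ℕ =>
        pr P ({ω | xs n < X i ω} ∩
            {ω | ∀ m : ℕ, 1 ≤ m → (1 - F (xs n)) * m ≤ t → X (m + i) ω ≤ xs n}) /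
          pr P {ω | xs n < X i ω})
        atTop (nhds (θ i * Real.exp (-(γ * t)))) :=
  stmt9_general P X F xs q p τ hτ hmeas hF hFbarpos hFbar hq hmix hp hqp θin hθin θ hθlim hunif γ
    hcesaro
end

section
/- Let {X_n} satisfy AIM(x_n) with separation sequence q_n and mixing coefficients α_n, suppose n·F̄(x_n) → τ > 0 as n → ∞, and let (p_n) be positive integers with p_n = o(n), n·α_n = o(p_n) and q_n = o(p_n). Then limsup_{n→∞} [ P(M_n ≤ x_n) − exp{−∑_{j=1}^{n} P(X_j > x_n, M_{j,j+p_n} ≤ x_n)} ] ≤ 0, i.e. P(M_n ≤ x_n) ≤ exp{−∑_{j=1}^{n} P(X_j > x_n, M_{j,j+p_n} ≤ x_n)} + o(1). -/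
open MeasureTheory Filter Finset Asymptotics

/-!
Write `x = xₙ` and `s_j = P(X_j > x, M_{j,j+p} ≤ x)`. Cut `{1, …, n}` into
`k ≈ n / (p + q)` blocks of length `p`, each followed by a gap of length `q`. Dropping the
gaps only enlarges `{Mₙ ≤ x}`, and AIM factorises its probability block by block at a cost
`αₙ` per block, `k αₙ ≤ n αₙ / p = o(1)` in total. Within a block `B = [a, b]` the event
`{M(B) ≤ x}` and the events "`j` is the last exceedance in `[j, b]`", `j ∈ B`, partition `Ω`,
and the `j`-th of them contains `{X_j > x, M_{j,j+p} ≤ x}` because `b ≤ j + p`; hence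
`P(M(B) ≤ x) ≤ 1 - ∑_{j ∈ B} s_j ≤ exp (-∑_{j ∈ B} s_j)`. At most `k q + 2 (p + q)` indices
lie outside the blocks and each `s_j ≤ F̄(x)`, so restoring them changes the exponent by
`O((q / p + p / n) · n F̄(x)) = o(1)`.
-/

def lastExceedance {Ω : Type*} (X : ℕ → Ω → ℝ) (x : ℝ) (j b : ℕ) : Set Ω :=
  {ω | x < X j ω} ∩ allLe X (Set.Icc (j + 1) b) x

theorem le_prod_add_mul_of_le_mul_add {u b : ℕ → ℝ} {c : ℝ} (hc : 0 ≤ c) {k : ℕ}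
    (hb : ∀ i < k, 0 ≤ b i ∧ b i ≤ 1) (hu : ∀ i < k, u i ≤ b i * u (i + 1) + c)
    (hk : u k ≤ 1) :
    u 0 ≤ ∏ i ∈ range k, b i + k * c := by
  induction k generalizing u b with
  | zero => simpa using hk
  | succ k ih =>
    have htail : u 1 ≤ ∏ i ∈ range k, b (i + 1) + k * c :=
      ih (fun i hi => hb (i + 1) (by omega)) (fun i hi => hu (i + 1) (by omega)) hk
    obtain ⟨hb0, hb1⟩ := hb 0 k.succ_pos
    have hkc : b 0 * (k * c) ≤ k * c := mul_le_of_le_one_left (by positivity) hb1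
    rw [prod_range_succ', Nat.cast_succ]
    linarith [hu 0 k.succ_pos, mul_le_mul_of_nonneg_left htail hb0]

theorem sum_Icc_le_sum_blocks_add {f : ℕ → ℝ} {c : ℝ} {n p L k : ℕ}
    (hf : ∀ j ∈ Icc 1 n, f j ≤ c) (hpL : p ≤ L) (hkn : k * L ≤ n) :
    ∑ j ∈ Icc 1 n, f j ≤
      ∑ i ∈ range k, ∑ j ∈ Icc (i * L + 1) (i * L + p), f j + ((n : ℝ) - k * p) * c := by
  set U := (range k).biUnion fun i => Icc (i * L + 1) (i * L + p)
  have hblock : ∀ i, ∀ j ∈ Icc (i * L + 1) (i * L + p), (j - 1) / L = i := fun i j hj => by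
    rw [mem_Icc] at hj
    exact Nat.div_eq_of_lt_le (by omega) (by rw [add_one_mul]; omega)
  have hdisj : (range k : Set ℕ).PairwiseDisjoint fun i => Icc (i * L + 1) (i * L + p) :=
    fun i _ i' _ hne => disjoint_left.2 fun j hj hj' =>
      hne ((hblock i j hj).symm.trans (hblock i' j hj'))
  have hU : U ⊆ Icc 1 n := by
    intro j hj
    simp only [U, mem_biUnion, mem_range, mem_Icc] at hj ⊢
    obtain ⟨i, hi, hj⟩ := hj
    have : (i + 1) * L ≤ k * L := Nat.mul_le_mul_right L hi
    rw [add_one_mul] at this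
    omega
  have hkp : k * p ≤ n := (Nat.mul_le_mul_left k hpL).trans hkn
  have hcard : #(Icc 1 n \ U) = n - k * p := by
    have hblock_card : ∀ i, #(Icc (i * L + 1) (i * L + p)) = p := fun i => by
      rw [Nat.card_Icc]; omega
    rw [card_sdiff_of_subset hU, card_biUnion hdisj, sum_congr rfl fun i _ => hblock_card i,
      sum_const, card_range, smul_eq_mul, Nat.card_Icc]
    omega
  calc ∑ j ∈ Icc 1 n, f j = ∑ j ∈ Icc 1 n \ U, f j + ∑ j ∈ U, f j := (sum_sdiff hU).symm
    _ ≤ #(Icc 1 n \ U) • c + ∑ j ∈ U, f j := by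
      gcongr
      exact sum_le_card_nsmul _ _ _ fun j hj => hf j (mem_sdiff.1 hj).1
    _ = _ := by
      rw [hcard, sum_biUnion hdisj, nsmul_eq_mul, Nat.cast_sub hkp]
      push_cast
      ring

theorem Asymptotics.IsLittleO.eventually_mul_le {f g : ℕ → ℕ}
    (h : (fun n => (f n : ℝ)) =o[atTop] fun n => (g n : ℝ)) (m : ℕ) :
    ∀ᶠ n in atTop, m * f n ≤ g n := by
  filter_upwards [h.def (by positivity : (0 : ℝ) < 1 / (m + 1))] with n hn
  simp only [Real.norm_natCast] at hn
  have hm : (0 : ℝ) < m + 1 := by positivity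
  have : ((m * f n : ℕ) : ℝ) ≤ g n := by
    rw [div_mul_eq_mul_div, one_mul, le_div_iff₀ hm] at hn
    push_cast
    nlinarith [(Nat.cast_nonneg (f n) : (0 : ℝ) ≤ f n)]
  exact_mod_cast this

theorem exp_neg_le_exp_neg_add_sub_one {S W ε : ℝ} (hS : 0 ≤ S) (hε : 0 ≤ ε)
    (h : S ≤ W + ε) : Real.exp (-W) ≤ Real.exp (-S) + (Real.exp ε - 1) := by
  have hexpS : Real.exp (-S) ≤ 1 := Real.exp_le_one_iff.2 (by linarith)
  have hexpε : 1 ≤ Real.exp ε := Real.one_le_exp hε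
  calc Real.exp (-W) ≤ Real.exp (-S) * Real.exp ε := by
        rw [← Real.exp_add]; exact Real.exp_le_exp.2 (by linarith)
    _ ≤ Real.exp (-S) + (Real.exp ε - 1) := by nlinarith [Real.exp_pos (-S)]

section Probability

variable {Ω : Type*} {X : ℕ → Ω → ℝ} {x : ℝ}

theorem allLe_anti {S T : Set ℕ} (h : S ⊆ T) : allLe X T x ⊆ allLe X S x :=
  fun _ hω i hi => hω i (h hi)

variable [MeasurableSpace Ω] {P : Measure Ω} {xs : ℕ → ℝ} {q : ℕ → ℕ} {α : ℕ → ℝ}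

theorem AIMBound.nonneg (hbd : AIMBound P X xs q α) {n : ℕ} (hq : 1 ≤ q n)
    (hqn : 3 * q n ≤ n) : 0 ≤ α n :=
  (abs_nonneg _).trans (hbd n 1 (q n) (3 * q n) le_rfl hq (by omega) hqn (by omega) (by omega))

variable [IsProbabilityMeasure P]

theorem pr_lt_eq_one_sub_s16 {j : ℕ} (hXj : Measurable (X j)) :
    pr P {ω | x < X j ω} = 1 - pr P {ω | X j ω ≤ x} := by
  rw [show {ω | x < X j ω} = {ω | X j ω ≤ x}ᶜ by ext; simp]
  exact probReal_compl_eq_one_sub (measurableSet_le hXj measurable_const)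

theorem pr_allLe_Icc_succ_sub {j b : ℕ} (hXj : Measurable (X j)) (hjb : j ≤ b) :
    pr P (allLe X (Set.Icc (j + 1) b) x) - pr P (allLe X (Set.Icc j b) x) =
      pr P (lastExceedance X x j b) := by
  have hinter :
      allLe X (Set.Icc (j + 1) b) x ∩ {ω | X j ω ≤ x} = allLe X (Set.Icc j b) x := by
    rw [← Set.insert_Icc_add_one_left_eq_Icc hjb]
    ext ω
    simp [allLe, and_comm]
  have hdiff : allLe X (Set.Icc (j + 1) b) x \ {ω | X j ω ≤ x} = lastExceedance X x j b := by
    ext ω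
    simp [lastExceedance, and_comm]
  have h := measureReal_inter_add_sdiff (μ := P) (s := allLe X (Set.Icc (j + 1) b) x)
    (t := {ω | X j ω ≤ x}) (measurableSet_le hXj measurable_const)
  rw [hinter, hdiff] at h
  change P.real _ - P.real _ = P.real _
  linarith

theorem pr_allLe_Icc_add_sum_pr_lastExceedance (hX : ∀ i, Measurable (X i)) {a b : ℕ}
    (hab : a ≤ b) :
    pr P (allLe X (Set.Icc a b) x) + ∑ j ∈ Icc a b, pr P (lastExceedance X x j b) = 1 := by
  have hend : pr P (allLe X (Set.Icc (b + 1) b) x) = 1 := by simp [allLe, pr]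
  have htel := sum_Icc_sub hab fun j => pr P (allLe X (Set.Icc j b) x)
  rw [sum_congr rfl fun j hj => pr_allLe_Icc_succ_sub (hX j) (mem_Icc.1 hj).2, hend] at htel
  linarith

theorem pr_allLe_Icc_le_exp (hX : ∀ i, Measurable (X i)) {a b p : ℕ} (hab : a ≤ b)
    (hba : b ≤ a + p) :
    pr P (allLe X (Set.Icc a b) x) ≤
      Real.exp (-∑ j ∈ Icc a b, pr P (lastExceedance X x j (j + p))) := by
  have hsum : ∑ j ∈ Icc a b, pr P (lastExceedance X x j (j + p)) ≤
      ∑ j ∈ Icc a b, pr P (lastExceedance X x j b) :=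
    sum_le_sum fun j hj => measureReal_mono <| Set.inter_subset_inter_right _ <|
      allLe_anti <| Set.Icc_subset_Icc_right (by rw [mem_Icc] at hj; omega)
  linarith [pr_allLe_Icc_add_sum_pr_lastExceedance (P := P) (x := x) hX hab,
    Real.add_one_le_exp (-∑ j ∈ Icc a b, pr P (lastExceedance X x j (j + p)))]

theorem AIMBound.pr_allLe_le_mul_add (hbd : AIMBound P X xs q α) {n a p : ℕ} (hp : 1 ≤ p)
    (hqp : q n ≤ p) (han : a + 2 * (p + q n) ≤ n) :
    pr P (allLe X (Set.Icc (a + 1) n) (xs n)) ≤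
      pr P (allLe X (Set.Icc (a + 1) (a + p)) (xs n)) *
        pr P (allLe X (Set.Icc (a + p + q n + 1) n) (xs n)) + α n := by
  have hgap : pr P (allLe X (Set.Icc (a + 1) n) (xs n)) ≤
      pr P (allLe X (Set.Icc (a + 1) (a + p) ∪ Set.Icc (a + p + q n + 1) n) (xs n)) :=
    measureReal_mono <| allLe_anti fun i hi => by
      simp only [Set.mem_union, Set.mem_Icc] at hi ⊢
      omega
  have hmix := hbd n (a + 1) (a + p) n (by omega) (by omega) (by omega) le_rfl (by omega)
    (by omega)
  linarith [(abs_le.1 hmix).2]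

theorem AIMBound.pr_allLe_le_exp_add (hX : ∀ i, Measurable (X i)) (hbd : AIMBound P X xs q α)
    {n p k : ℕ} (hp : 1 ≤ p) (hqp : q n ≤ p) (hα : 0 ≤ α n) (hkn : (k + 1) * (p + q n) ≤ n) :
    pr P (allLe X (Set.Icc 1 n) (xs n)) ≤
      Real.exp (-∑ i ∈ range k, ∑ j ∈ Icc (i * (p + q n) + 1) (i * (p + q n) + p),
        pr P (lastExceedance X (xs n) j (j + p))) + k * α n := by
  set L := p + q n
  have hpeel := le_prod_add_mul_of_le_mul_add (k := k) hα
    (u := fun i => pr P (allLe X (Set.Icc (i * L + 1) n) (xs n)))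
    (b := fun i => pr P (allLe X (Set.Icc (i * L + 1) (i * L + p)) (xs n)))
    (fun i _ => ⟨measureReal_nonneg, measureReal_le_one⟩)
    (fun i hi => by
      have hiL : (i + 2) * L ≤ (k + 1) * L := Nat.mul_le_mul_right L (by omega)
      rw [show (i + 1) * L + 1 = i * L + p + q n + 1 by ring]
      exact hbd.pr_allLe_le_mul_add hp hqp (by linarith : i * L + 2 * L ≤ n))
    measureReal_le_one
  have hprod : ∏ i ∈ range k, pr P (allLe X (Set.Icc (i * L + 1) (i * L + p)) (xs n)) ≤
      Real.exp (-∑ i ∈ range k, ∑ j ∈ Icc (i * L + 1) (i * L + p),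
        pr P (lastExceedance X (xs n) j (j + p))) := by
    rw [← sum_neg_distrib, Real.exp_sum]
    exact prod_le_prod (fun i _ => measureReal_nonneg)
      fun i _ => pr_allLe_Icc_le_exp hX (by omega) (by omega)
  simp only [zero_mul, zero_add] at hpeel
  linarith

theorem AIMBound.pr_allLe_sub_exp_le (hX : ∀ i, Measurable (X i)) (hbd : AIMBound P X xs q α)
    {n p : ℕ} {c : ℝ} (hc : ∀ j ∈ Icc 1 n, pr P {ω | xs n < X j ω} ≤ c) (hp : 1 ≤ p)
    (hqp : q n ≤ p) (hpn : 4 * p ≤ n) (hα : 0 ≤ α n) :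
    pr P (allLe X (Set.Icc 1 n) (xs n)) -
        Real.exp (-∑ j ∈ Icc 1 n, pr P (lastExceedance X (xs n) j (j + p))) ≤
      Real.exp ((q n / p + 4 * (p / n)) * (n * c)) - 1 + n * α n / p := by
  set L := p + q n with hL_def
  set k := n / L - 1 with hk_def
  have hL : 0 < L := by omega
  have hdiv : 1 ≤ n / L := (Nat.le_div_iff_mul_le hL).2 (by omega)
  have hkn : (k + 1) * L ≤ n := by
    rw [show k + 1 = n / L by omega]
    exact Nat.div_mul_le_self n L
  have hnk : n < (k + 2) * L := by
    rw [show k + 2 = n / L + 1 by omega, mul_comm]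
    exact Nat.lt_mul_div_succ n hL
  have hkp : k * p ≤ n := by
    have : k * p ≤ k * L := Nat.mul_le_mul_left k (by omega)
    linarith [add_one_mul k L]
  set S := ∑ j ∈ Icc 1 n, pr P (lastExceedance X (xs n) j (j + p))
  set W := ∑ i ∈ range k, ∑ j ∈ Icc (i * L + 1) (i * L + p),
    pr P (lastExceedance X (xs n) j (j + p))
  have hc0 : 0 ≤ c := measureReal_nonneg.trans (hc 1 (mem_Icc.2 ⟨le_rfl, by omega⟩))
  have hS : 0 ≤ S := sum_nonneg fun _ _ => measureReal_nonneg
  have hSW : S ≤ W + ((n : ℝ) - k * p) * c :=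
    sum_Icc_le_sum_blocks_add
      (fun j hj => (measureReal_mono Set.inter_subset_left).trans (hc j hj)) (by omega)
      (by linarith [add_one_mul k L])
  have hkp' : (k : ℝ) * p ≤ n := by exact_mod_cast hkp
  have hnk' : (n : ℝ) < (k + 2) * (p + q n) := by exact_mod_cast hnk
  have hqp' : (q n : ℝ) ≤ p := by exact_mod_cast hqp
  have hp' : (0 : ℝ) < p := by exact_mod_cast hp
  have hn' : (0 : ℝ) < n := by exact_mod_cast (show 0 < n by omega)
  have hε0 : 0 ≤ ((n : ℝ) - k * p) * c := mul_nonneg (by linarith) hc0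
  have hkq : (k : ℝ) * q n ≤ q n / p * n := by
    rw [div_mul_eq_mul_div, le_div_iff₀ hp']
    nlinarith [mul_le_mul_of_nonneg_left hkp' (Nat.cast_nonneg (q n) : (0 : ℝ) ≤ q n)]
  have hε : ((n : ℝ) - k * p) * c ≤ (q n / p + 4 * (p / n)) * (n * c) :=
    calc ((n : ℝ) - k * p) * c ≤ (q n / p * n + 4 * p) * c := by gcongr; linarith
      _ = (q n / p + 4 * (p / n)) * (n * c) := by field_simp
  have hkα : k * α n ≤ n * α n / p := by
    rw [le_div_iff₀ hp']
    nlinarith [mul_le_mul_of_nonneg_right hkp' hα]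
  calc pr P (allLe X (Set.Icc 1 n) (xs n)) - Real.exp (-S)
      ≤ Real.exp (-W) + k * α n - Real.exp (-S) := by
        linarith [hbd.pr_allLe_le_exp_add hX hp hqp hα hkn]
    _ ≤ Real.exp (((n : ℝ) - k * p) * c) - 1 + k * α n := by
        linarith [exp_neg_le_exp_neg_add_sub_one hS hε0 hSW]
    _ ≤ _ := by gcongr

end Probability

theorem stmt16_general {Ω : Type*} [MeasurableSpace Ω] (P : Measure Ω) [IsProbabilityMeasure P]
    (X : ℕ → Ω → ℝ) (F : ℝ → ℝ) (xs : ℕ → ℝ) (q : ℕ → ℕ) (α : ℕ → ℝ) (p : ℕ → ℕ)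
    (τ : ℝ)
    (hmeas : ∀ i, Measurable (X i))
    (hF : ∀ i, 1 ≤ i → ∀ t : ℝ, pr P {ω | X i ω ≤ t} = F t)
    (hqpos : ∀ m, 1 ≤ q m)
    (hbd : AIMBound P X xs q α)
    (hFbar : Tendsto (fun n : ℕ => (n : ℝ) * (1 - F (xs n))) atTop (nhds τ))
    (hppos : ∀ m, 1 ≤ p m)
    (hp : (fun n : ℕ => (p n : ℝ)) =o[atTop] (fun n : ℕ => (n : ℝ)))
    (hnα : (fun n : ℕ => (n : ℝ) * α n) =o[atTop] (fun n : ℕ => (p n : ℝ)))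
    (hqp : (fun n : ℕ => (q n : ℝ)) =o[atTop] (fun n : ℕ => (p n : ℝ))) :
    Filter.limsup (fun n : ℕ =>
      pr P (allLe X (Set.Icc 1 n) (xs n)) -
        Real.exp (-(∑ j ∈ Finset.Icc 1 n,
          pr P ({ω | xs n < X j ω} ∩ allLe X (Set.Icc (j + 1) (j + p n)) (xs n)))))
      atTop ≤ 0 := by
  show limsup (fun n => pr P (allLe X (Set.Icc 1 n) (xs n)) -
    Real.exp (-∑ j ∈ Icc 1 n, pr P (lastExceedance X (xs n) j (j + p n)))) atTop ≤ 0
  have hbound : Tendsto (fun n : ℕ => Real.exp ((q n / p n + 4 * (p n / n)) *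
      (n * (1 - F (xs n)))) - 1 + n * α n / p n) atTop (nhds 0) := by
    have hexponent := (hqp.tendsto_div_nhds_zero.add
      (hp.tendsto_div_nhds_zero.const_mul 4)).mul hFbar
    simp only [mul_zero, add_zero, zero_mul] at hexponent
    simpa using (((Real.continuous_exp.tendsto 0).comp hexponent).sub_const 1).add
      hnα.tendsto_div_nhds_zero
  refine (limsup_le_limsup ?_ ?_ hbound.isBoundedUnder_le).trans hbound.limsup_eq.le
  · filter_upwards [hqp.eventually_mul_le 1, hp.eventually_mul_le (g := id) 4] with n hqn hpn
    simp only [one_mul, id] at hqn hpn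
    exact hbd.pr_allLe_sub_exp_le hmeas
      (fun j hj => by rw [pr_lt_eq_one_sub_s16 (hmeas j), hF j (mem_Icc.1 hj).1]) (hppos n) hqn hpn
      (hbd.nonneg (hqpos n) (by have := hppos n; omega))
  · refine isCoboundedUnder_le_of_le atTop (x := -1) fun n => ?_
    rw [neg_eq_zero_sub]
    exact sub_le_sub measureReal_nonneg <|
      Real.exp_le_one_iff.2 <| neg_nonpos.2 <| sum_nonneg fun _ _ => measureReal_nonneg

/-- under AIM(xₙ), `n·F̄(xₙ) → τ > 0`, and `pₙ = o(n)`,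
`n·αₙ = o(pₙ)`, `qₙ = o(pₙ)`:
`limsup_{n→∞} [P(Mₙ ≤ xₙ) − exp{−∑_{j=1}^n P(X_j > xₙ, M_{j,j+pₙ} ≤ xₙ)}] ≤ 0`. -/
theorem stmt16 {Ω : Type*} [MeasurableSpace Ω] (P : Measure Ω) [IsProbabilityMeasure P]
    (X : ℕ → Ω → ℝ) (F : ℝ → ℝ) (xs : ℕ → ℝ) (q : ℕ → ℕ) (α : ℕ → ℝ) (p : ℕ → ℕ)
    (τ : ℝ) (hτ : 0 < τ)
    (hmeas : ∀ i, Measurable (X i))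
    (hF : ∀ i, 1 ≤ i → ∀ t : ℝ, pr P {ω | X i ω ≤ t} = F t)
    (hqpos : ∀ m, 1 ≤ q m)
    (hq : (fun n : ℕ => (q n : ℝ)) =o[atTop] (fun n : ℕ => (n : ℝ)))
    (hα : Tendsto α atTop (nhds 0))
    (hbd : AIMBound P X xs q α)
    (hFbar : Tendsto (fun n : ℕ => (n : ℝ) * (1 - F (xs n))) atTop (nhds τ))
    (hppos : ∀ m, 1 ≤ p m)
    (hp : (fun n : ℕ => (p n : ℝ)) =o[atTop] (fun n : ℕ => (n : ℝ)))
    (hnα : (fun n : ℕ => (n : ℝ) * α n) =o[atTop] (fun n : ℕ => (p n : ℝ)))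
    (hqp : (fun n : ℕ => (q n : ℝ)) =o[atTop] (fun n : ℕ => (p n : ℝ))) :
    Filter.limsup (fun n : ℕ =>
      pr P (allLe X (Set.Icc 1 n) (xs n)) -
        Real.exp (-(∑ j ∈ Finset.Icc 1 n,
          pr P ({ω | xs n < X j ω} ∩ allLe X (Set.Icc (j + 1) (j + p n)) (xs n)))))
      atTop ≤ 0 :=
  stmt16_general P X F xs q α p τ hmeas hF hqpos hbd hFbar hppos hp hnα hqp
end
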